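/- arXiv:2401.08243 — 4 statements merged into one kernel-verified Lean document; each statement's English description precedes it below -/
import Mathlib

section
/- Let (T, 𝒜) be a measurable space and ν a finite signed measure on T with total variation measure |ν|. Let d ≥ 1 be an integer, let σ be a probability measure on ℂ^d, and let α ≥ 2 and C > 0 be real numbers such that ∫_{ℂ^d} |log |⟨a, v⟩||^α dσ(a) ≤ C for every v ∈ ℂ^d with ‖v‖ = 1. Let ρ : T → ℂ^d be measurable with ‖ρ(x)‖ = 1 for every x ∈ T, and define G : ℂ^d → ℝ by G(a) = ∫_T log |⟨a, ρ(x)⟩| dν(x). Then G is square-integrable with respect to σ and the variance satisfies Var_σ(G) := ∫_{ℂ^d} G(a)² dσ(a) − (∫_{ℂ^d} G(a) dσ(a))² ≤ C^{2/α} (|ν|(T))². -/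
/-!
Pointwise, `|G a| ≤ ∫ |log ‖⟪a, ρ x⟫‖| d|ν|(x)`. By Cauchy–Schwarz in `x` and Tonelli,
`∫ G² dσ ≤ |ν|(T) · ∫ (∫ log² ‖⟪a, ρ x⟫‖ dσ(a)) d|ν|(x)`, and since `σ` is a probability
measure and `α ≥ 2`, Lyapunov's inequality bounds each inner second moment by `C^{2/α}`.
The variance is at most the second moment.
-/

open MeasureTheory
open scoped InnerProductSpace ENNReal

noncomputable instance (n : ℕ) : MeasurableSpace (EuclideanSpace ℂ (Fin n)) := MeasurableSpace.comap WithLp.ofLp MeasurableSpace.pi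
instance (n : ℕ) : BorelSpace (EuclideanSpace ℂ (Fin n)) := PiLp.borelSpace 2

/-- Integral of a real function against a finite signed measure, defined via the
Jordan decomposition `ν = ν⁺ − ν⁻`. -/
noncomputable def sintegral {T : Type*} [MeasurableSpace T] (ν : SignedMeasure T)
    (f : T → ℝ) : ℝ :=
  (∫ x, f x ∂ν.toJordanDecomposition.posPart) - ∫ x, f x ∂ν.toJordanDecomposition.negPart

namespace MeasureTheory

variable {α β : Type*} [MeasurableSpace α] [MeasurableSpace β]

theorem lintegral_rpow_enorm_le_rpow_lintegral_rpow_enorm {ε : Type*} [TopologicalSpace ε]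
    [ContinuousENorm ε] (μ : Measure α) [IsProbabilityMeasure μ] {f : α → ε}
    (hf : AEStronglyMeasurable f μ) {p q : ℝ} (hp : 0 < p) (hpq : p ≤ q) :
    ∫⁻ a, ‖f a‖ₑ ^ p ∂μ ≤ (∫⁻ a, ‖f a‖ₑ ^ q ∂μ) ^ (p / q) :=
  calc ∫⁻ a, ‖f a‖ₑ ^ p ∂μ = eLpNorm' f p μ ^ p := lintegral_rpow_enorm_eq_rpow_eLpNorm' hp
    _ ≤ eLpNorm' f q μ ^ p :=
      ENNReal.rpow_le_rpow (eLpNorm'_le_eLpNorm'_of_exponent_le hp hpq μ hf) hp.le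
    _ = (∫⁻ a, ‖f a‖ₑ ^ q ∂μ) ^ (p / q) := by
      rw [eLpNorm'_eq_lintegral_enorm, ← ENNReal.rpow_mul, one_div_mul_eq_div]

theorem sq_lintegral_le_measure_univ_mul_lintegral_sq (μ : Measure α) {f : α → ℝ≥0∞}
    (hf : AEMeasurable f μ) : (∫⁻ x, f x ∂μ) ^ 2 ≤ μ Set.univ * ∫⁻ x, f x ^ 2 ∂μ := by
  have h := ENNReal.lintegral_mul_le_Lp_mul_Lq μ Real.HolderConjugate.two_two hf
    aemeasurable_const (g := 1)
  simp only [Pi.one_apply, mul_one, ENNReal.one_rpow, lintegral_const, one_mul] at h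
  calc (∫⁻ x, f x ∂μ) ^ 2
      ≤ ((∫⁻ x, f x ^ (2 : ℝ) ∂μ) ^ (1 / 2 : ℝ) * μ Set.univ ^ (1 / 2 : ℝ)) ^ 2 := by gcongr
    _ = μ Set.univ * ∫⁻ x, f x ^ 2 ∂μ := by
      rw [mul_pow, ← ENNReal.rpow_natCast, ← ENNReal.rpow_natCast, ← ENNReal.rpow_mul,
        ← ENNReal.rpow_mul]
      norm_num [mul_comm]

theorem lintegral_sq_lintegral_le_of_forall_le (σ : Measure α) [SFinite σ]
    (μ : Measure β) [SFinite μ]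
    {g : α → β → ℝ≥0∞} (hg : Measurable (Function.uncurry g)) {M : ℝ≥0∞}
    (hM : ∀ x, ∫⁻ a, g a x ^ 2 ∂σ ≤ M) :
    ∫⁻ a, (∫⁻ x, g a x ∂μ) ^ 2 ∂σ ≤ μ Set.univ ^ 2 * M :=
  calc ∫⁻ a, (∫⁻ x, g a x ∂μ) ^ 2 ∂σ
      ≤ ∫⁻ a, μ Set.univ * ∫⁻ x, g a x ^ 2 ∂μ ∂σ := lintegral_mono fun a =>
        sq_lintegral_le_measure_univ_mul_lintegral_sq μ hg.of_uncurry_left.aemeasurable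
    _ = μ Set.univ * ∫⁻ x, ∫⁻ a, g a x ^ 2 ∂σ ∂μ := by
      rw [lintegral_const_mul _ ?_, lintegral_lintegral_swap (hg.pow_const 2).aemeasurable]
      exact (hg.pow_const 2).lintegral_prod_right'
    _ ≤ μ Set.univ * ∫⁻ _, M ∂μ := by gcongr with x; exact hM x
    _ = μ Set.univ ^ 2 * M := by rw [lintegral_const]; ring

theorem memLp_two_of_lintegral_enorm_sq_lt_top {f : α → ℝ} {μ : Measure α}
    (hf : AEStronglyMeasurable f μ) (h : ∫⁻ a, ‖f a‖ₑ ^ 2 ∂μ < ∞) : MemLp f 2 μ := by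
  refine ⟨hf, (eLpNorm_lt_top_iff_lintegral_rpow_enorm_lt_top two_ne_zero
    ENNReal.ofNat_ne_top).2 ?_⟩
  simpa using h

theorem integral_sq_le_of_lintegral_enorm_sq_le {f : α → ℝ} {μ : Measure α}
    (hf : AEStronglyMeasurable f μ) {K : ℝ} (hK : 0 ≤ K)
    (h : ∫⁻ a, ‖f a‖ₑ ^ 2 ∂μ ≤ ENNReal.ofReal K) : ∫ a, f a ^ 2 ∂μ ≤ K := by
  rw [integral_eq_lintegral_of_nonneg_ae (ae_of_all _ fun a => sq_nonneg _) (hf.pow 2)]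
  refine ENNReal.toReal_le_of_le_ofReal hK (le_of_eq_of_le (lintegral_congr fun a => ?_) h)
  rw [Real.enorm_eq_ofReal_abs, ← ENNReal.ofReal_pow (abs_nonneg _), sq_abs]

end MeasureTheory

theorem enorm_sintegral_le_lintegral_totalVariation {T : Type*} [MeasurableSpace T]
    (ν : SignedMeasure T) (f : T → ℝ) :
    ‖sintegral ν f‖ₑ ≤ ∫⁻ x, ‖f x‖ₑ ∂ν.totalVariation :=
  calc ‖sintegral ν f‖ₑ
      ≤ ‖∫ x, f x ∂ν.toJordanDecomposition.posPart‖ₑ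
          + ‖∫ x, f x ∂ν.toJordanDecomposition.negPart‖ₑ := enorm_sub_le
    _ ≤ (∫⁻ x, ‖f x‖ₑ ∂ν.toJordanDecomposition.posPart)
          + ∫⁻ x, ‖f x‖ₑ ∂ν.toJordanDecomposition.negPart :=
      add_le_add (enorm_integral_le_lintegral_enorm _) (enorm_integral_le_lintegral_enorm _)
    _ = ∫⁻ x, ‖f x‖ₑ ∂ν.totalVariation := (lintegral_add_measure _ _ _).symm

theorem StronglyMeasurable.sintegral_prod_right {α T : Type*} [MeasurableSpace α]
    [MeasurableSpace T] (ν : SignedMeasure T) {f : α → T → ℝ}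
    (hf : StronglyMeasurable (Function.uncurry f)) :
    StronglyMeasurable fun a => sintegral ν (f a) :=
  hf.integral_prod_right'.sub hf.integral_prod_right'

theorem variance_estimate_linear_statistic_general
    {T : Type*} [MeasurableSpace T] (ν : SignedMeasure T)
    (d : ℕ)
    (σ : Measure (EuclideanSpace ℂ (Fin d))) [IsProbabilityMeasure σ]
    (α C : ℝ) (hα : 2 ≤ α) (hC : 0 < C)
    (hmom : ∀ v : EuclideanSpace ℂ (Fin d), ‖v‖ = 1 →
      ∫⁻ a, ENNReal.ofReal (|Real.log ‖⟪a, v⟫_ℂ‖| ^ α) ∂σ ≤ ENNReal.ofReal C)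
    (ρ : T → EuclideanSpace ℂ (Fin d)) (hρ : Measurable ρ)
    (hρ1 : ∀ x, ‖ρ x‖ = 1)
    (G : EuclideanSpace ℂ (Fin d) → ℝ)
    (hG : G = fun a => sintegral ν fun x => Real.log ‖⟪a, ρ x⟫_ℂ‖) :
    MemLp G 2 σ ∧
      (∫ a, (G a) ^ 2 ∂σ) - (∫ a, G a ∂σ) ^ 2 ≤
        C ^ (2 / α) * ((ν.totalVariation Set.univ).toReal) ^ 2 := by
  set f : EuclideanSpace ℂ (Fin d) → T → ℝ := fun a x => Real.log ‖⟪a, ρ x⟫_ℂ‖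
  have hf : Measurable (Function.uncurry f) :=
    Real.measurable_log.comp (measurable_fst.inner (hρ.comp measurable_snd)).norm
  have hsecond (x : T) : ∫⁻ a, ‖f a x‖ₑ ^ 2 ∂σ ≤ ENNReal.ofReal C ^ (2 / α) := by
    have hmoment : ∫⁻ a, ‖f a x‖ₑ ^ α ∂σ ≤ ENNReal.ofReal C := by
      refine le_of_eq_of_le (lintegral_congr fun a => ?_) (hmom (ρ x) (hρ1 x))
      rw [Real.enorm_eq_ofReal_abs, ENNReal.ofReal_rpow_of_nonneg (abs_nonneg _) (by linarith)]
    simpa using (lintegral_rpow_enorm_le_rpow_lintegral_rpow_enorm σ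
      hf.of_uncurry_right.aestronglyMeasurable two_pos hα).trans
      (ENNReal.rpow_le_rpow hmoment (by positivity))
  have hG2 : ∫⁻ a, ‖G a‖ₑ ^ 2 ∂σ ≤
      ENNReal.ofReal (C ^ (2 / α) * ((ν.totalVariation Set.univ).toReal) ^ 2) := by
    rw [ENNReal.ofReal_mul (by positivity), ENNReal.ofReal_pow ENNReal.toReal_nonneg,
      ENNReal.ofReal_toReal (measure_ne_top _ _), ← ENNReal.ofReal_rpow_of_nonneg hC.le
      (by positivity), mul_comm]
    refine (lintegral_mono fun a => ?_).trans
      (lintegral_sq_lintegral_le_of_forall_le σ _ hf.enorm hsecond)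
    gcongr
    exact hG ▸ enorm_sintegral_le_lintegral_totalVariation ν _
  have hGm : AEStronglyMeasurable G σ :=
    (hG ▸ StronglyMeasurable.sintegral_prod_right ν hf.stronglyMeasurable).aestronglyMeasurable
  refine ⟨memLp_two_of_lintegral_enorm_sq_lt_top hGm (hG2.trans_lt ENNReal.ofReal_lt_top), ?_⟩
  calc (∫ a, (G a) ^ 2 ∂σ) - (∫ a, G a ∂σ) ^ 2 ≤ ∫ a, (G a) ^ 2 ∂σ :=
      sub_le_self _ (sq_nonneg _)
    _ ≤ _ := integral_sq_le_of_lintegral_enorm_sq_le hGm (by positivity) hG2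

/-- Variance estimate for the smooth linear statistic `G(a) = ∫_T log |⟨a, ρ x⟩| dν(x)`:
`G ∈ L²(σ)` and `Var_σ(G) ≤ C^{2/α} (|ν|(T))²`. -/
theorem variance_estimate_linear_statistic
    {T : Type*} [MeasurableSpace T] (ν : SignedMeasure T)
    (d : ℕ) (hd : 1 ≤ d)
    (σ : Measure (EuclideanSpace ℂ (Fin d))) [IsProbabilityMeasure σ]
    (α C : ℝ) (hα : 2 ≤ α) (hC : 0 < C)
    (hmom : ∀ v : EuclideanSpace ℂ (Fin d), ‖v‖ = 1 →
      ∫⁻ a, ENNReal.ofReal (|Real.log ‖⟪a, v⟫_ℂ‖| ^ α) ∂σ ≤ ENNReal.ofReal C)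
    (ρ : T → EuclideanSpace ℂ (Fin d)) (hρ : Measurable ρ)
    (hρ1 : ∀ x, ‖ρ x‖ = 1)
    (G : EuclideanSpace ℂ (Fin d) → ℝ)
    (hG : G = fun a => sintegral ν fun x => Real.log ‖⟪a, ρ x⟫_ℂ‖) :
    MemLp G 2 σ ∧
      (∫ a, (G a) ^ 2 ∂σ) - (∫ a, G a ∂σ) ^ 2 ≤
        C ^ (2 / α) * ((ν.totalVariation Set.univ).toReal) ^ 2 :=
  variance_estimate_linear_statistic_general ν d σ α C hα hC hmom ρ hρ hρ1 G hG
end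

section
/- Let n ≥ 1 be an integer and let σ_n be the standard Gaussian measure on ℂⁿ, i.e. the measure with density a ↦ π^{−n} exp(−‖a‖²) with respect to Lebesgue measure on ℂⁿ. Then for every real α ≥ 1 and every v ∈ ℂⁿ with ‖v‖ = 1, one has ∫_{ℂⁿ} |log |⟨a, v⟩||^α dσ_n(a) = 2 ∫₀^∞ r |log r|^α e^{−r²} dr; in particular the value of this integral is independent of n and of v. -/
/-!
The Gaussian density depends only on `‖a‖`, and Lebesgue measure on `ℂⁿ ≅ ℝ²ⁿ`, being a Haar
measure giving the unit ball finite positive mass, is invariant under real linear isometries;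
so `σ_n` is unitarily invariant and a unitary map sending a coordinate vector to `v` turns
`⟨a, v⟩` into a coordinate of `a`. As `σ_n` is the product of `n` copies of the normalised
Gaussian on `ℂ`, the integral becomes a single integral over `ℂ`, which polar coordinates turn
into the radial integral on the right.
-/

open MeasureTheory
open scoped InnerProductSpace ENNReal Real

noncomputable instance (n : ℕ) : MeasureSpace (EuclideanSpace ℂ (Fin n)) :=
  ⟨(Measure.pi fun _ => volume).map (WithLp.toLp 2)⟩

/-- The standard Gaussian measure on `ℂⁿ`, with density `π^{-n} exp(-‖a‖²)` with respect
to Lebesgue measure. -/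
noncomputable def gaussianCn (n : ℕ) : Measure (EuclideanSpace ℂ (Fin n)) :=
  volume.withDensity fun a => ENNReal.ofReal ((π ^ n)⁻¹ * Real.exp (-‖a‖ ^ 2))

theorem LinearIsometryEquiv.measurePreserving_of_isAddHaarMeasure {E : Type*}
    [NormedAddCommGroup E] [NormedSpace ℝ E] [FiniteDimensional ℝ E] [MeasurableSpace E]
    [BorelSpace E] (μ : Measure E) [μ.IsAddHaarMeasure] (f : E ≃ₗᵢ[ℝ] E) :
    MeasurePreserving f μ μ := by
  refine ⟨f.continuous.measurable, ?_⟩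
  have : (μ.map f).IsAddHaarMeasure := f.toContinuousLinearEquiv.isAddHaarMeasure_map μ
  have hball : μ.map f (Metric.ball 0 1) = μ (Metric.ball 0 1) := by
    rw [Measure.map_apply f.continuous.measurable Metric.isOpen_ball.measurableSet,
      f.preimage_ball, map_zero]
  rw [Measure.isAddLeftInvariant_eq_smul (μ.map f) μ] at hball ⊢
  have hc : (μ.map f).addHaarScalarFactor μ = 1 := by
    rw [Measure.smul_apply, ENNReal.smul_def, smul_eq_mul] at hball
    exact_mod_cast (ENNReal.mul_eq_right (Metric.measure_ball_pos μ 0 one_pos).ne'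
      measure_ball_lt_top.ne).1 hball
  rw [hc, one_smul]

instance (n : ℕ) : (volume : Measure (EuclideanSpace ℂ (Fin n))).IsAddHaarMeasure :=
  (PiLp.continuousLinearEquiv 2 ℝ fun _ : Fin n => ℂ).symm.isAddHaarMeasure_map _

theorem integral_gaussianCn (n : ℕ) (f : EuclideanSpace ℂ (Fin n) → ℝ) :
    ∫ a, f a ∂gaussianCn n = ∫ a, (π ^ n)⁻¹ * Real.exp (-‖a‖ ^ 2) * f a := by
  have hmeas : Measurable fun a : EuclideanSpace ℂ (Fin n) =>
      (π ^ n)⁻¹ * Real.exp (-‖a‖ ^ 2) := by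
    fun_prop
  rw [gaussianCn, integral_withDensity_eq_integral_toReal_smul₀ hmeas.ennreal_ofReal.aemeasurable
    (Filter.Eventually.of_forall fun _ => ENNReal.ofReal_lt_top)]
  refine integral_congr_ae (Filter.Eventually.of_forall fun a => ?_)
  simp only [smul_eq_mul]
  rw [ENNReal.toReal_ofReal (by positivity)]

theorem integral_gaussianCn_comp_linearIsometryEquiv (n : ℕ)
    (U : EuclideanSpace ℂ (Fin n) ≃ₗᵢ[ℝ] EuclideanSpace ℂ (Fin n))
    (f : EuclideanSpace ℂ (Fin n) → ℝ) :
    ∫ a, f (U a) ∂gaussianCn n = ∫ a, f a ∂gaussianCn n := by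
  rw [integral_gaussianCn, integral_gaussianCn,
    ← (U.measurePreserving_of_isAddHaarMeasure volume).integral_comp
      U.toHomeomorph.measurableEmbedding fun a => (π ^ n)⁻¹ * Real.exp (-‖a‖ ^ 2) * f a]
  simp only [LinearIsometryEquiv.norm_map]

theorem Complex.integral_comp_norm (F : ℝ → ℝ) :
    ∫ z : ℂ, F ‖z‖ = 2 * π * ∫ r in Set.Ioi (0 : ℝ), r * F r := by
  rw [integral_fun_norm_addHaar volume F, Complex.finrank_real_complex, measureReal_def,
    Complex.volume_ball]
  simp [mul_assoc]

theorem Complex.integral_exp_neg_norm_sq : ∫ z : ℂ, Real.exp (-‖z‖ ^ 2) = π := by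
  simpa [one_add_one_eq_two, Real.Gamma_two] using Complex.integral_exp_neg_rpow (p := 2) one_le_two

theorem Complex.integral_inv_pi_mul_exp_neg_norm_sq_mul_comp_norm (F : ℝ → ℝ) :
    ∫ z : ℂ, π⁻¹ * Real.exp (-‖z‖ ^ 2) * F ‖z‖ =
      2 * ∫ r in Set.Ioi (0 : ℝ), r * F r * Real.exp (-r ^ 2) := by
  have hintegrand : ∀ r : ℝ, r * (π⁻¹ * Real.exp (-r ^ 2) * F r) =
      π⁻¹ * (r * F r * Real.exp (-r ^ 2)) := fun r => by ring
  rw [Complex.integral_comp_norm fun r => π⁻¹ * Real.exp (-r ^ 2) * F r]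
  simp only [hintegrand, integral_const_mul]
  field_simp

theorem integral_euclideanSpace_prod_eq_prod (n : ℕ) (h : Fin n → ℂ → ℝ) :
    ∫ x : EuclideanSpace ℂ (Fin n), ∏ i, h i (x i) = ∏ i, ∫ z, h i z :=
  (integral_map_equiv (MeasurableEquiv.toLp 2 (Fin n → ℂ)) _).trans
    (integral_fintype_prod_eq_prod h)

theorem EuclideanSpace.inv_pi_pow_mul_exp_neg_norm_sq (n : ℕ) (x : EuclideanSpace ℂ (Fin n)) :
    (π ^ n)⁻¹ * Real.exp (-‖x‖ ^ 2) = ∏ i, π⁻¹ * Real.exp (-‖x i‖ ^ 2) := by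
  rw [Finset.prod_mul_distrib, ← Real.exp_sum, Finset.sum_neg_distrib, EuclideanSpace.norm_sq_eq]
  simp

theorem integral_gaussianCn_comp_apply (n : ℕ) (i : Fin n) (g : ℂ → ℝ) :
    ∫ a, g (a i) ∂gaussianCn n = ∫ z, π⁻¹ * Real.exp (-‖z‖ ^ 2) * g z := by
  classical
  set h : Fin n → ℂ → ℝ := fun j z => π⁻¹ * Real.exp (-‖z‖ ^ 2) * if j = i then g z else 1
  have hprod : ∀ a : EuclideanSpace ℂ (Fin n),
      (π ^ n)⁻¹ * Real.exp (-‖a‖ ^ 2) * g (a i) = ∏ j, h j (a j) := fun a => by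
    simp only [h, Finset.prod_mul_distrib, Finset.prod_ite_eq', Finset.mem_univ, if_true,
      EuclideanSpace.inv_pi_pow_mul_exp_neg_norm_sq]
  have hnormalized : ∫ z : ℂ, π⁻¹ * Real.exp (-‖z‖ ^ 2) = 1 := by
    rw [integral_const_mul, Complex.integral_exp_neg_norm_sq, inv_mul_cancel₀ Real.pi_ne_zero]
  rw [integral_gaussianCn, integral_congr_ae (Filter.Eventually.of_forall hprod),
    integral_euclideanSpace_prod_eq_prod, Finset.prod_eq_single_of_mem i (Finset.mem_univ i)]
  · simp [h]
  · intro j _ hji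
    simp [h, hji, hnormalized]

open Module in
theorem exists_orthonormalBasis_apply_eq {𝕜 E ι : Type*} [RCLike 𝕜] [NormedAddCommGroup E]
    [InnerProductSpace 𝕜 E] [FiniteDimensional 𝕜 E] [Fintype ι]
    (card_ι : finrank 𝕜 E = Fintype.card ι) {v : E} (hv : ‖v‖ = 1) :
    ∃ (i : ι) (b : OrthonormalBasis ι 𝕜 E), b i = v := by
  have hv0 : v ≠ 0 := norm_ne_zero_iff.1 (hv ▸ one_ne_zero)
  obtain ⟨i⟩ : Nonempty ι :=
    Fintype.card_pos_iff.1 (card_ι ▸ finrank_pos_iff_exists_ne_zero.2 ⟨v, hv0⟩)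
  have hsingle : Orthonormal 𝕜 (({i} : Set ι).domRestrict fun _ => v) := by
    simp [Set.domRestrict, hv]
  obtain ⟨b, hb⟩ := hsingle.exists_orthonormalBasis_extension_of_card_eq card_ι
  exact ⟨i, b, hb i rfl⟩

theorem integral_gaussianCn_comp_norm_inner (n : ℕ) {v : EuclideanSpace ℂ (Fin n)}
    (hv : ‖v‖ = 1) (F : ℝ → ℝ) :
    ∫ a, F ‖⟪a, v⟫_ℂ‖ ∂gaussianCn n =
      2 * ∫ r in Set.Ioi (0 : ℝ), r * F r * Real.exp (-r ^ 2) := by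
  obtain ⟨i, b, rfl⟩ := exists_orthonormalBasis_apply_eq (𝕜 := ℂ) (ι := Fin n) (by simp) hv
  set U := b.repr.symm.toIsometryEquiv.toRealLinearIsometryEquivOfMapZero b.repr.symm.map_zero
  have hinner : ∀ x, ‖⟪U x, b i⟫_ℂ‖ = ‖x i‖ := fun x => by
    change ‖⟪b.repr.symm x, b i⟫_ℂ‖ = _
    rw [← b.repr_symm_single, LinearIsometryEquiv.inner_map_map,
      EuclideanSpace.inner_single_right]
    simp
  calc ∫ a, F ‖⟪a, b i⟫_ℂ‖ ∂gaussianCn n = ∫ a, F ‖⟪U a, b i⟫_ℂ‖ ∂gaussianCn n :=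
        (integral_gaussianCn_comp_linearIsometryEquiv n U _).symm
    _ = ∫ a, F ‖a i‖ ∂gaussianCn n := by simp only [hinner]
    _ = ∫ z, π⁻¹ * Real.exp (-‖z‖ ^ 2) * F ‖z‖ :=
        integral_gaussianCn_comp_apply n i fun z => F ‖z‖
    _ = _ := Complex.integral_inv_pi_mul_exp_neg_norm_sq_mul_comp_norm F

theorem gaussian_log_moment_general (n : ℕ) (α : ℝ)
    (v : EuclideanSpace ℂ (Fin n)) (hv : ‖v‖ = 1) :
    ∫ a, |Real.log ‖⟪a, v⟫_ℂ‖| ^ α ∂(gaussianCn n) =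
      2 * ∫ r in Set.Ioi (0 : ℝ), r * |Real.log r| ^ α * Real.exp (-r ^ 2) :=
  integral_gaussianCn_comp_norm_inner n hv fun r => |Real.log r| ^ α

/-- The Gaussian logarithmic moment identity:
`∫_{ℂⁿ} |log|⟨a,v⟩||^α dσ_n(a) = 2∫₀^∞ r |log r|^α e^{-r²} dr` for every unit vector `v`. -/
theorem gaussian_log_moment (n : ℕ) (hn : 1 ≤ n) (α : ℝ) (hα : 1 ≤ α)
    (v : EuclideanSpace ℂ (Fin n)) (hv : ‖v‖ = 1) :
    ∫ a, |Real.log ‖⟪a, v⟫_ℂ‖| ^ α ∂(gaussianCn n) =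
      2 * ∫ r in Set.Ioi (0 : ℝ), r * |Real.log r| ^ α * Real.exp (-r ^ 2) :=
  gaussian_log_moment_general n α v hv
end

section
/- Let (T, 𝒜) be a measurable space and ν a finite signed measure on T with total variation measure |ν|. Let d ≥ 1 be an integer, let σ be a probability measure on ℂ^d, and let α ≥ 1 and C > 0 be real numbers such that ∫_{ℂ^d} |log |⟨a, v⟩||^α dσ(a) ≤ C for every v ∈ ℂ^d with ‖v‖ = 1. Let ρ : T → ℂ^d be measurable with ‖ρ(x)‖ = 1 for every x ∈ T, let g : T → ℝ be |ν|-integrable, and define W : ℂ^d → ℝ by W(a) = ∫_T ( g(x) + log |⟨a, ρ(x)⟩| ) dν(x). Then W is σ-integrable and |∫_{ℂ^d} W(a) dσ(a)| ≤ ∫_T |g| d|ν| + C^{1/α} · |ν|(T). -/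
open MeasureTheory
open scoped InnerProductSpace ENNReal

/-!
Write `W(a) = ∫_T F(a, x) dν(x)` with `F(a, x) = g(x) + log |⟨a, ρ(x)⟩|`. For each fixed `x`,
the moment hypothesis and Hölder's inequality on the probability space `(ℂ^d, σ)` give
`∫ |log |⟨a, ρ(x)⟩|| dσ(a) ≤ C^{1/α}`, so by Tonelli `F` is integrable for `σ ⊗ |ν|` with
`∫ |F| d(σ ⊗ |ν|) ≤ ∫ |g| d|ν| + C^{1/α} |ν|(T)`. Since `|∫ f dν| ≤ ∫ |f| d|ν|` pointwise in `a`,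
Fubini on the two Jordan parts of `ν` transfers integrability and the bound to `W`.
-/

section

variable {E T : Type*} [MeasurableSpace E] [MeasurableSpace T]

lemma lintegral_enorm_le_of_lintegral_rpow_le (σ : Measure E) [IsProbabilityMeasure σ]
    {p C : ℝ} (hp : 1 ≤ p) (hC : 0 ≤ C) {f : E → ℝ} (hf : AEStronglyMeasurable f σ)
    (h : ∫⁻ a, ENNReal.ofReal (|f a| ^ p) ∂σ ≤ ENNReal.ofReal C) :
    ∫⁻ a, ‖f a‖ₑ ∂σ ≤ ENNReal.ofReal (C ^ (1 / p)) := by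
  have hp0 : 0 < p := zero_lt_one.trans_le hp
  have hLp := eLpNorm_le_eLpNorm_of_exponent_le (μ := σ)
    (ENNReal.one_le_ofReal.mpr hp) hf
  rw [eLpNorm_one_eq_lintegral_enorm, eLpNorm_eq_lintegral_rpow_enorm_toReal
    (ENNReal.ofReal_pos.mpr hp0).ne' ENNReal.ofReal_ne_top, ENNReal.toReal_ofReal hp0.le] at hLp
  have hpow (a : E) : ‖f a‖ₑ ^ p = ENNReal.ofReal (|f a| ^ p) := by
    rw [Real.enorm_eq_ofReal_abs, ENNReal.ofReal_rpow_of_nonneg (abs_nonneg _) hp0.le]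
  calc ∫⁻ a, ‖f a‖ₑ ∂σ ≤ (∫⁻ a, ‖f a‖ₑ ^ p ∂σ) ^ (1 / p) := hLp
    _ ≤ ENNReal.ofReal C ^ (1 / p) := by
      simp_rw [hpow]
      gcongr
    _ = ENNReal.ofReal (C ^ (1 / p)) := ENNReal.ofReal_rpow_of_nonneg hC (by positivity)

lemma lintegral_enorm_prod_add_le (σ : Measure E) [IsProbabilityMeasure σ] (μ : Measure T)
    [SFinite μ] {g : T → ℝ} {L : E × T → ℝ} (hg : AEMeasurable g μ)
    (hL : AEMeasurable L (σ.prod μ)) {c : ℝ≥0∞} (hLc : ∀ x, ∫⁻ a, ‖L (a, x)‖ₑ ∂σ ≤ c) :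
    ∫⁻ z, ‖g z.2 + L z‖ₑ ∂σ.prod μ ≤ ∫⁻ x, ‖g x‖ₑ ∂μ + c * μ Set.univ := by
  have hsection (x : T) : ∫⁻ a, ‖g x + L (a, x)‖ₑ ∂σ ≤ ‖g x‖ₑ + c :=
    calc ∫⁻ a, ‖g x + L (a, x)‖ₑ ∂σ ≤ ∫⁻ a, (‖g x‖ₑ + ‖L (a, x)‖ₑ) ∂σ :=
          lintegral_mono fun a => enorm_add_le _ _
      _ = ‖g x‖ₑ + ∫⁻ a, ‖L (a, x)‖ₑ ∂σ := by
          rw [lintegral_add_left measurable_const, lintegral_const, measure_univ, mul_one]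
      _ ≤ ‖g x‖ₑ + c := by gcongr; exact hLc x
  calc ∫⁻ z, ‖g z.2 + L z‖ₑ ∂σ.prod μ = ∫⁻ x, ∫⁻ a, ‖g x + L (a, x)‖ₑ ∂σ ∂μ :=
        lintegral_prod_symm _ ((hg.comp_snd.add hL).enorm)
    _ ≤ ∫⁻ x, (‖g x‖ₑ + c) ∂μ := lintegral_mono hsection
    _ = ∫⁻ x, ‖g x‖ₑ ∂μ + c * μ Set.univ := by
        rw [lintegral_add_right _ measurable_const, lintegral_const]

lemma enorm_sintegral_le (ν : SignedMeasure T) (f : T → ℝ) :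
    ‖sintegral ν f‖ₑ ≤ ∫⁻ x, ‖f x‖ₑ ∂ν.totalVariation :=
  calc ‖sintegral ν f‖ₑ
      ≤ ‖∫ x, f x ∂ν.toJordanDecomposition.posPart‖ₑ
        + ‖∫ x, f x ∂ν.toJordanDecomposition.negPart‖ₑ := enorm_sub_le
    _ ≤ ∫⁻ x, ‖f x‖ₑ ∂ν.toJordanDecomposition.posPart
        + ∫⁻ x, ‖f x‖ₑ ∂ν.toJordanDecomposition.negPart := by
      gcongr <;> exact enorm_integral_le_lintegral_enorm _
    _ = ∫⁻ x, ‖f x‖ₑ ∂ν.totalVariation := (lintegral_add_measure _ _ _).symm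

lemma MeasureTheory.Integrable.sintegral_prod_left {σ : Measure E} [SFinite σ]
    {ν : SignedMeasure T} {F : E × T → ℝ} (hF : Integrable F (σ.prod ν.totalVariation)) :
    Integrable (fun a => sintegral ν fun x => F (a, x)) σ := by
  rw [SignedMeasure.totalVariation, Measure.prod_add, integrable_add_measure] at hF
  exact hF.1.integral_prod_left.sub hF.2.integral_prod_left

lemma lintegral_enorm_sintegral_prod_le (σ : Measure E) (ν : SignedMeasure T)
    {F : E × T → ℝ} (hF : AEMeasurable F (σ.prod ν.totalVariation)) :
    ∫⁻ a, ‖sintegral ν fun x => F (a, x)‖ₑ ∂σ ≤ ∫⁻ z, ‖F z‖ₑ ∂σ.prod ν.totalVariation :=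
  calc ∫⁻ a, ‖sintegral ν fun x => F (a, x)‖ₑ ∂σ
      ≤ ∫⁻ a, ∫⁻ x, ‖F (a, x)‖ₑ ∂ν.totalVariation ∂σ :=
        lintegral_mono fun _ => enorm_sintegral_le ν _
    _ = ∫⁻ z, ‖F z‖ₑ ∂σ.prod ν.totalVariation :=
        (lintegral_prod _ hF.enorm).symm

end

theorem expected_statistic_bound_general
    {T : Type*} [MeasurableSpace T] (ν : SignedMeasure T)
    (d : ℕ)
    (σ : Measure (EuclideanSpace ℂ (Fin d))) [IsProbabilityMeasure σ]
    (α C : ℝ) (hα : 1 ≤ α) (hC : 0 < C)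
    (hmom : ∀ v : EuclideanSpace ℂ (Fin d), ‖v‖ = 1 →
      ∫⁻ a, ENNReal.ofReal (|Real.log ‖⟪a, v⟫_ℂ‖| ^ α) ∂σ ≤ ENNReal.ofReal C)
    (ρ : T → EuclideanSpace ℂ (Fin d)) (hρ : Measurable ρ)
    (hρ1 : ∀ x, ‖ρ x‖ = 1)
    (g : T → ℝ) (hg : Integrable g ν.totalVariation)
    (W : EuclideanSpace ℂ (Fin d) → ℝ)
    (hW : W = fun a => sintegral ν fun x => g x + Real.log ‖⟪a, ρ x⟫_ℂ‖) :
    Integrable W σ ∧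
      |∫ a, W a ∂σ| ≤ (∫ x, |g x| ∂ν.totalVariation) +
        C ^ (1 / α) * (ν.totalVariation Set.univ).toReal := by
  subst hW
  have hL : Measurable fun z : EuclideanSpace ℂ (Fin d) × T => Real.log ‖⟪z.1, ρ z.2⟫_ℂ‖ := by
    fun_prop
  have hLc (x : T) : ∫⁻ a, ‖Real.log ‖⟪a, ρ x⟫_ℂ‖‖ₑ ∂σ ≤ ENNReal.ofReal (C ^ (1 / α)) :=
    lintegral_enorm_le_of_lintegral_rpow_le σ hα hC.le
      (hL.comp measurable_prodMk_right).aestronglyMeasurable (hmom _ (hρ1 x))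
  have hF_bound := lintegral_enorm_prod_add_le σ ν.totalVariation hg.1.aemeasurable
    hL.aemeasurable hLc
  have hbound_ne_top : ∫⁻ x, ‖g x‖ₑ ∂ν.totalVariation
      + ENNReal.ofReal (C ^ (1 / α)) * ν.totalVariation Set.univ ≠ ∞ :=
    ENNReal.add_ne_top.2 ⟨hg.2.ne, by finiteness⟩
  have hF : Integrable (fun z => g z.2 + Real.log ‖⟪z.1, ρ z.2⟫_ℂ‖) (σ.prod ν.totalVariation) :=
    ⟨hg.1.comp_snd.add hL.aestronglyMeasurable, hF_bound.trans_lt hbound_ne_top.lt_top⟩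
  have hW := hF.sintegral_prod_left
  refine ⟨hW, ?_⟩
  calc |∫ a, sintegral ν (fun x => g x + Real.log ‖⟪a, ρ x⟫_ℂ‖) ∂σ|
      ≤ (∫⁻ a, ‖sintegral ν fun x => g x + Real.log ‖⟪a, ρ x⟫_ℂ‖‖ₑ ∂σ).toReal := by
        rw [← integral_norm_eq_lintegral_enorm hW.1]
        exact abs_integral_le_integral_abs
    _ ≤ (∫⁻ x, ‖g x‖ₑ ∂ν.totalVariation
          + ENNReal.ofReal (C ^ (1 / α)) * ν.totalVariation Set.univ).toReal :=
        ENNReal.toReal_mono hbound_ne_top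
          ((lintegral_enorm_sintegral_prod_le σ ν hF.1.aemeasurable).trans hF_bound)
    _ = (∫ x, |g x| ∂ν.totalVariation) + C ^ (1 / α) * (ν.totalVariation Set.univ).toReal := by
        rw [ENNReal.toReal_add hg.2.ne (by finiteness), ENNReal.toReal_mul,
          ENNReal.toReal_ofReal (by positivity), ← integral_norm_eq_lintegral_enorm hg.1]
        simp only [Real.norm_eq_abs]

/-- The expected smooth linear statistic `W(a) = ∫_T (g(x) + log|⟨a,ρ(x)⟩|) dν(x)` is
`σ`-integrable and `|∫ W dσ| ≤ ∫|g| d|ν| + C^{1/α} |ν|(T)`. -/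
theorem expected_statistic_bound
    {T : Type*} [MeasurableSpace T] (ν : SignedMeasure T)
    (d : ℕ) (hd : 1 ≤ d)
    (σ : Measure (EuclideanSpace ℂ (Fin d))) [IsProbabilityMeasure σ]
    (α C : ℝ) (hα : 1 ≤ α) (hC : 0 < C)
    (hmom : ∀ v : EuclideanSpace ℂ (Fin d), ‖v‖ = 1 →
      ∫⁻ a, ENNReal.ofReal (|Real.log ‖⟪a, v⟫_ℂ‖| ^ α) ∂σ ≤ ENNReal.ofReal C)
    (ρ : T → EuclideanSpace ℂ (Fin d)) (hρ : Measurable ρ)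
    (hρ1 : ∀ x, ‖ρ x‖ = 1)
    (g : T → ℝ) (hg : Integrable g ν.totalVariation)
    (W : EuclideanSpace ℂ (Fin d) → ℝ)
    (hW : W = fun a => sintegral ν fun x => g x + Real.log ‖⟪a, ρ x⟫_ℂ‖) :
    Integrable W σ ∧
      |∫ a, W a ∂σ| ≤ (∫ x, |g x| ∂ν.totalVariation) +
        C ^ (1 / α) * (ν.totalVariation Set.univ).toReal :=
  expected_statistic_bound_general ν d σ α C hα hC hmom ρ hρ hρ1 g hg W hW
end

section
/- Let (T, 𝒜) be a measurable space, let α ≥ 1 and M > 0 be real numbers, and for each p ∈ ℕ let: d_p ≥ 1 be an integer, ν_p a finite signed measure on T with total variation |ν_p|(T) ≤ M, σ_p a probability measure on ℂ^{d_p}, C_p > 0 a constant with ∫_{ℂ^{d_p}} |log |⟨a, v⟩||^α dσ_p(a) ≤ C_p for every unit vector v ∈ ℂ^{d_p}, ρ_p : T → ℂ^{d_p} a measurable map with ‖ρ_p(x)‖ = 1 for all x, and A_p > 0. If lim_{p→∞} C_p^{1/α}/A_p = 0, then (1/A_p) ∫_T ∫_{ℂ^{d_p}} log |⟨a, ρ_p(x)⟩|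 dσ_p(a) dν_p(x) → 0 as p → ∞. -/
open MeasureTheory Filter
open scoped InnerProductSpace ENNReal

/-! By Lyapunov's inequality on the probability space `(ℂ^{d_p}, σ_p)`, the `L^α` bound on
`log |⟨a, v⟩|` gives `|∫ log |⟨a, v⟩| dσ_p(a)| ≤ C_p^{1/α}` uniformly in the unit vector `v`.
Integrating this bounded function against `ν_p` costs at most the factor `|ν_p|(T) ≤ M`, so the
normalized term is `O(C_p^{1/α} / A_p)`. -/

theorem norm_integral_le_rpow_of_lintegral_rpow_le {E : Type*} [MeasurableSpace E]
    {μ : Measure E} [IsProbabilityMeasure μ] {f : E → ℝ} (hf : AEStronglyMeasurable f μ)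
    {α C : ℝ} (hα : 1 ≤ α) (hC : 0 ≤ C)
    (h : ∫⁻ a, ENNReal.ofReal (|f a| ^ α) ∂μ ≤ ENNReal.ofReal C) :
    ‖∫ a, f a ∂μ‖ ≤ C ^ (1 / α) := by
  have hα0 : 0 < α := one_pos.trans_le hα
  have hL1 : ∫⁻ a, ENNReal.ofReal ‖f a‖ ∂μ ≤ ENNReal.ofReal (C ^ (1 / α)) :=
    calc ∫⁻ a, ENNReal.ofReal ‖f a‖ ∂μ = eLpNorm' f 1 μ := by
          simp [eLpNorm'_eq_lintegral_enorm, Real.enorm_eq_ofReal_abs]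
      _ ≤ eLpNorm' f α μ := eLpNorm'_le_eLpNorm'_of_exponent_le one_pos hα μ hf
      _ = (∫⁻ a, ENNReal.ofReal (|f a| ^ α) ∂μ) ^ (1 / α) := by
          simp [eLpNorm'_eq_lintegral_enorm, Real.enorm_eq_ofReal_abs,
            ENNReal.ofReal_rpow_of_nonneg (abs_nonneg _) hα0.le]
      _ ≤ ENNReal.ofReal C ^ (1 / α) := by gcongr
      _ = ENNReal.ofReal (C ^ (1 / α)) := ENNReal.ofReal_rpow_of_nonneg hC (by positivity)
  calc ‖∫ a, f a ∂μ‖ ≤ (∫⁻ a, ENNReal.ofReal ‖f a‖ ∂μ).toReal := norm_integral_le_lintegral_norm f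
    _ ≤ C ^ (1 / α) := ENNReal.toReal_le_of_le_ofReal (by positivity) hL1

theorem abs_sintegral_le_mul_totalVariation {T : Type*} [MeasurableSpace T]
    (ν : SignedMeasure T) {f : T → ℝ} {B : ℝ} (hf : ∀ x, ‖f x‖ ≤ B) :
    |sintegral ν f| ≤ B * (ν.totalVariation Set.univ).toReal := by
  set μp := ν.toJordanDecomposition.posPart
  set μn := ν.toJordanDecomposition.negPart
  calc |sintegral ν f| ≤ ‖∫ x, f x ∂μp‖ + ‖∫ x, f x ∂μn‖ := abs_sub _ _
    _ ≤ B * μp.real Set.univ + B * μn.real Set.univ :=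
        add_le_add (norm_integral_le_of_norm_le_const (.of_forall hf))
          (norm_integral_le_of_norm_le_const (.of_forall hf))
    _ = B * (ν.totalVariation Set.univ).toReal := by
        rw [← mul_add, SignedMeasure.totalVariation, Measure.add_apply,
          ENNReal.toReal_add (measure_ne_top _ _) (measure_ne_top _ _)]
        rfl
theorem normalized_log_term_tendsto_zero_general
    {T : Type*} [MeasurableSpace T] (α M : ℝ) (hα : 1 ≤ α)
    (d : ℕ → ℕ)
    (ν : ℕ → SignedMeasure T)
    (hν : ∀ p, (ν p).totalVariation Set.univ ≤ ENNReal.ofReal M)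
    (σ : ∀ p : ℕ, Measure (EuclideanSpace ℂ (Fin (d p))))
    (hσ : ∀ p, IsProbabilityMeasure (σ p))
    (C : ℕ → ℝ) (hC : ∀ p, 0 < C p)
    (hmom : ∀ p, ∀ v : EuclideanSpace ℂ (Fin (d p)), ‖v‖ = 1 →
      ∫⁻ a, ENNReal.ofReal (|Real.log ‖⟪a, v⟫_ℂ‖| ^ α) ∂(σ p) ≤ ENNReal.ofReal (C p))
    (ρ : ∀ p : ℕ, T → EuclideanSpace ℂ (Fin (d p)))
    (hρ1 : ∀ p x, ‖ρ p x‖ = 1)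
    (A : ℕ → ℝ) (hA : ∀ p, 0 < A p)
    (hlim : Tendsto (fun p => C p ^ (1 / α) / A p) atTop (nhds 0)) :
    Tendsto (fun p =>
        (1 / A p) * sintegral (ν p) fun x => ∫ a, Real.log ‖⟪a, ρ p x⟫_ℂ‖ ∂(σ p))
      atTop (nhds 0) := by
  have hI : ∀ p, |sintegral (ν p) fun x => ∫ a, Real.log ‖⟪a, ρ p x⟫_ℂ‖ ∂(σ p)|
      ≤ C p ^ (1 / α) * max M 0 := fun p =>
    have := hσ p
    calc _ ≤ C p ^ (1 / α) * ((ν p).totalVariation Set.univ).toReal :=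
          abs_sintegral_le_mul_totalVariation _ fun x =>
            norm_integral_le_rpow_of_lintegral_rpow_le
              (by fun_prop : Measurable _).aestronglyMeasurable hα (hC p).le
              (hmom p _ (hρ1 p x))
      -- `(ENNReal.ofReal M).toReal` unfolds to `max M 0`
      _ ≤ C p ^ (1 / α) * max M 0 :=
          mul_le_mul_of_nonneg_left (ENNReal.toReal_mono ENNReal.ofReal_ne_top (hν p))
            (Real.rpow_nonneg (hC p).le _)
  refine squeeze_zero_norm (fun p => ?_)
    (by simpa only [zero_mul] using hlim.mul_const (max M 0))
  rw [norm_mul, norm_div, norm_one, Real.norm_of_nonneg (hA p).le, Real.norm_eq_abs,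
    one_div_mul_eq_div, div_mul_eq_mul_div]
  exact div_le_div_of_nonneg_right (hI p) (hA p).le

/-- If `C_p^{1/α}/A_p → 0` then the normalized logarithmic terms
`(1/A_p) ∫_T ∫_{ℂ^{d_p}} log|⟨a, ρ_p(x)⟩| dσ_p(a) dν_p(x)` tend to `0`. -/
theorem normalized_log_term_tendsto_zero
    {T : Type*} [MeasurableSpace T] (α M : ℝ) (hα : 1 ≤ α) (hM : 0 < M)
    (d : ℕ → ℕ) (hd : ∀ p, 1 ≤ d p)
    (ν : ℕ → SignedMeasure T)
    (hν : ∀ p, (ν p).totalVariation Set.univ ≤ ENNReal.ofReal M)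
    (σ : ∀ p : ℕ, Measure (EuclideanSpace ℂ (Fin (d p))))
    (hσ : ∀ p, IsProbabilityMeasure (σ p))
    (C : ℕ → ℝ) (hC : ∀ p, 0 < C p)
    (hmom : ∀ p, ∀ v : EuclideanSpace ℂ (Fin (d p)), ‖v‖ = 1 →
      ∫⁻ a, ENNReal.ofReal (|Real.log ‖⟪a, v⟫_ℂ‖| ^ α) ∂(σ p) ≤ ENNReal.ofReal (C p))
    (ρ : ∀ p : ℕ, T → EuclideanSpace ℂ (Fin (d p))) (hρ : ∀ p, Measurable (ρ p))
    (hρ1 : ∀ p x, ‖ρ p x‖ = 1)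
    (A : ℕ → ℝ) (hA : ∀ p, 0 < A p)
    (hlim : Tendsto (fun p => C p ^ (1 / α) / A p) atTop (nhds 0)) :
    Tendsto (fun p =>
        (1 / A p) * sintegral (ν p) fun x => ∫ a, Real.log ‖⟪a, ρ p x⟫_ℂ‖ ∂(σ p))
      atTop (nhds 0) :=
  normalized_log_term_tendsto_zero_general α M hα d ν hν σ hσ C hC hmom ρ hρ1 A hA hlim
end
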